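/- For the explicit discretization z^{k+1} = z^k + ε(J∇H(z^k) + z⋆ − z^k) with step size ε = 1/(L² + 1), the averaged iterate z̄^T = (1/T)∑_{k=0}^{T−1} z^k satisfies H(z̄^T) ≤ (1/(εT))·(H(z^0) + (1/(2L))‖z^0 − z⋆‖²); in particular H(z̄^T) = O(1/T). -/

import Mathlib

/-!
Along the iteration the energy `E(z) = H(z) + ‖z - z⋆‖² / (2L)` drops by at least `ε H(z^k)` per
step. The descent lemma bounds `H(z^{k+1})`; the interpolation inequality
`⟪∇H x, z⋆ - x⟫ ≤ -H x - ‖∇H x‖² / (2L)` (convexity plus smoothness, using `∇H z⋆ = 0`) absorbs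
the gradient term; skewness of `J` kills `⟪∇H, J∇H⟫`; and `ε = 1/(L² + 1)` is exactly the step
for which the remaining cross terms `⟪z - z⋆, J∇H⟫` cancel. Telescoping gives
`ε ∑_{k<T} H(z^k) ≤ E(z^0)`, and Jensen's inequality passes to the average.
-/

open RealInnerProductSpace Finset

/-- The standard symplectic matrix `J` on `ℝ^{2n}`: `J (x, p) = (p, -x)`. -/
def Jmap (n : ℕ) (v : EuclideanSpace ℝ (Fin n ⊕ Fin n)) :
    EuclideanSpace ℝ (Fin n ⊕ Fin n) :=
  WithLp.toLp 2 (fun i => Sum.elim (fun a => v (Sum.inr a)) (fun a => -(v (Sum.inl a))) i)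

open scoped NNReal

section Smooth

variable {F : Type*} [NormedAddCommGroup F] [InnerProductSpace ℝ F] [CompleteSpace F]
  {H : F → ℝ}

theorem IsLocalMin.hasGradientAt_eq_zero {g x : F} (hmin : IsLocalMin H x)
    (hg : HasGradientAt H g x) : g = 0 := by
  simpa using hmin.hasFDerivAt_eq_zero hg.hasFDerivAt

theorem HasGradientAt.hasDerivAt_add_smul {g x v : F} {t : ℝ}
    (hg : HasGradientAt H g (x + t • v)) :
    HasDerivAt (fun s : ℝ => H (x + s • v)) ⟪g, v⟫ t := by
  have hline : HasDerivAt (fun s : ℝ => x + s • v) v t := by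
    simpa using ((hasDerivAt_id t).smul_const v).const_add x
  exact hg.hasFDerivAt.comp_hasDerivAt t hline

theorem ConvexOn.add_inner_gradient_le (hconv : ConvexOn ℝ Set.univ H) (hH : Differentiable ℝ H)
    (x y : F) : H x + ⟪gradient H x, y - x⟫ ≤ H y := by
  have hline : ConvexOn ℝ Set.univ (fun t : ℝ => H (x + t • (y - x))) := by
    simpa [Function.comp_def, AffineMap.lineMap_apply, add_comm] using
      hconv.comp_affineMap (AffineMap.lineMap x y : ℝ →ᵃ[ℝ] F)
  have hderiv : HasDerivAt (fun t : ℝ => H (x + t • (y - x))) ⟪gradient H x, y - x⟫ 0 :=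
    HasGradientAt.hasDerivAt_add_smul (by simpa using (hH x).hasGradientAt)
  have := hline.le_slope_of_hasDerivAt (Set.mem_univ 0) (Set.mem_univ 1) one_pos hderiv
  simp only [slope_def_field, one_smul, zero_smul, add_zero, add_sub_cancel, sub_zero,
    div_one] at this
  linarith

theorem le_add_inner_gradient_add_sq (hH : Differentiable ℝ H) {K : ℝ≥0}
    (hLip : LipschitzWith K (gradient H)) (x y : F) :
    H y ≤ H x + ⟪gradient H x, y - x⟫ + K / 2 * ‖y - x‖ ^ 2 := by
  set v := y - x
  let φ : ℝ → ℝ := fun t => H (x + t • v) - t * ⟪gradient H x, v⟫ - K / 2 * t ^ 2 * ‖v‖ ^ 2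
  have hφ (t : ℝ) :
      HasDerivAt φ (⟪gradient H (x + t • v), v⟫ - ⟪gradient H x, v⟫ - K * t * ‖v‖ ^ 2) t := by
    have h1 := ((hH (x + t • v)).hasGradientAt).hasDerivAt_add_smul (x := x) (v := v)
    have h2 := (hasDerivAt_id t).mul_const ⟪gradient H x, v⟫
    have h3 := ((hasDerivAt_pow 2 t).const_mul (K / 2 : ℝ)).mul_const (‖v‖ ^ 2)
    exact ((h1.sub h2).sub h3).congr_deriv (by push_cast; ring)
  have hanti : AntitoneOn φ (Set.Ici 0) := by
    refine antitoneOn_of_hasDerivWithinAt_nonpos (convex_Ici 0)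
      (fun t _ => (hφ t).continuousAt.continuousWithinAt) (fun t _ => (hφ t).hasDerivWithinAt) ?_
    intro t ht
    rw [interior_Ici] at ht
    have hgrad : ‖gradient H (x + t • v) - gradient H x‖ ≤ K * (t * ‖v‖) := by
      simpa [dist_eq_norm, norm_smul, abs_of_pos (Set.mem_Ioi.1 ht)] using
        hLip.dist_le_mul (x + t • v) x
    have hcs := real_inner_le_norm (gradient H (x + t • v) - gradient H x) v
    rw [inner_sub_left] at hcs
    linarith [mul_le_mul_of_nonneg_right hgrad (norm_nonneg v)]
  have := hanti (Set.mem_Ici.2 le_rfl) (Set.mem_Ici.2 zero_le_one) zero_le_one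
  simp only [φ, v, one_smul, add_sub_cancel, zero_smul, add_zero] at this
  linarith

theorem ConvexOn.inner_gradient_sub_le_of_gradient_eq_zero (hconv : ConvexOn ℝ Set.univ H)
    (hH : Differentiable ℝ H) {K : ℝ≥0} (hK : 0 < K) (hLip : LipschitzWith K (gradient H))
    {zstar : F} (hz : gradient H zstar = 0) (x : F) :
    ⟪gradient H x, zstar - x⟫ ≤ H zstar - H x - ‖gradient H x‖ ^ 2 / (2 * K) := by
  set g := gradient H x
  -- Convexity at `x` and smoothness at `zstar`, both evaluated at `y = zstar + ∇H x / K`.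
  set y := zstar + (K : ℝ)⁻¹ • g
  have hlower := hconv.add_inner_gradient_le hH x y
  have hupper := le_add_inner_gradient_add_sq hH hLip zstar y
  have hy : y - x = (zstar - x) + (K : ℝ)⁻¹ • g := by simp only [y]; abel
  rw [hy, inner_add_right, real_inner_smul_right, real_inner_self_eq_norm_sq] at hlower
  rw [hz, inner_zero_left, add_zero, add_sub_cancel_left, norm_smul, Real.norm_eq_abs,
    mul_pow, sq_abs] at hupper
  have hK' : (K : ℝ) ≠ 0 := by positivity
  have : (K : ℝ) / 2 * ((K : ℝ)⁻¹ ^ 2 * ‖g‖ ^ 2) = (K : ℝ)⁻¹ * ‖g‖ ^ 2 - ‖g‖ ^ 2 / (2 * K) := by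
    field_simp; ring
  linarith

noncomputable def lyapunov (H : F → ℝ) (K : ℝ≥0) (zstar x : F) : ℝ :=
  H x + 1 / (2 * K) * ‖x - zstar‖ ^ 2

theorem ConvexOn.mul_sub_add_lyapunov_le (hconv : ConvexOn ℝ Set.univ H)
    (hH : Differentiable ℝ H) {K : ℝ≥0} (hK : 0 < K) (hLip : LipschitzWith K (gradient H))
    {zstar : F} (hz : gradient H zstar = 0) {J : F → F} (hJ_inner : ∀ v, ⟪v, J v⟫ = 0)
    (hJ_norm : ∀ v, ‖J v‖ = ‖v‖) {ε : ℝ} (hε : ε = 1 / ((K : ℝ) ^ 2 + 1)) (x : F) :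
    ε * (H x - H zstar) + lyapunov H K zstar (x + ε • (J (gradient H x) + zstar - x)) ≤
      lyapunov H K zstar x := by
  set g := gradient H x
  set r := x - zstar
  set d := J g - r
  have hd : J g + zstar - x = d := by simp only [d, r]; abel
  have hεpos : 0 < ε := by rw [hε]; positivity
  have hdescent := le_add_inner_gradient_add_sq hH hLip x (x + ε • d)
  rw [add_sub_cancel_left, real_inner_smul_right, norm_smul, Real.norm_eq_abs, mul_pow, sq_abs,
    inner_sub_right, hJ_inner, zero_sub] at hdescent
  have hinterp := hconv.inner_gradient_sub_le_of_gradient_eq_zero hH hK hLip hz x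
  rw [← neg_sub, inner_neg_right] at hinterp
  have hdist :
      ‖x + ε • d - zstar‖ ^ 2 = ‖r‖ ^ 2 + 2 * ε * (⟪r, J g⟫ - ‖r‖ ^ 2) + ε ^ 2 * ‖d‖ ^ 2 := by
    rw [show x + ε • d - zstar = r + ε • d by simp only [r]; abel, norm_add_sq_real,
      real_inner_smul_right, norm_smul, Real.norm_eq_abs, mul_pow, sq_abs, inner_sub_right,
      real_inner_self_eq_norm_sq]
    ring
  have hnorm_d : ‖d‖ ^ 2 = ‖g‖ ^ 2 - 2 * ⟪r, J g⟫ + ‖r‖ ^ 2 := by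
    rw [norm_sub_sq_real, hJ_norm, real_inner_comm]
  have key : K / 2 * (ε ^ 2 * ‖d‖ ^ 2) + 1 / (2 * K) * ‖x + ε • d - zstar‖ ^ 2 =
      1 / (2 * K) * ‖r‖ ^ 2 + ε * (‖g‖ ^ 2 / (2 * K)) - ε / (2 * K) * ‖r‖ ^ 2 := by
    rw [hdist, hnorm_d, hε]
    field_simp
    ring
  have hr : 0 ≤ ε / (2 * K) * ‖r‖ ^ 2 := by positivity
  rw [lyapunov, lyapunov, hd]
  linarith [mul_le_mul_of_nonneg_left hinterp hεpos.le]

end Smooth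

theorem Finset.sum_range_le_sub_of_add_le {α : Type*} [AddCommGroup α] [PartialOrder α]
    [IsOrderedAddMonoid α] {f E : ℕ → α} (h : ∀ k, f k + E (k + 1) ≤ E k) (T : ℕ) :
    ∑ k ∈ range T, f k ≤ E 0 - E T :=
  (sum_le_sum fun k _ => le_sub_iff_add_le.2 (h k)).trans_eq (sum_range_sub' E T)

theorem ConvexOn.map_inv_card_smul_sum_le {ι E : Type*} [AddCommGroup E] [Module ℝ E]
    {C : Set E} {f : E → ℝ} (hf : ConvexOn ℝ C f) {s : Finset ι} (hs : s.Nonempty) {z : ι → E}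
    (hz : ∀ i ∈ s, z i ∈ C) :
    f ((#s : ℝ)⁻¹ • ∑ i ∈ s, z i) ≤ (#s : ℝ)⁻¹ * ∑ i ∈ s, f (z i) := by
  have hw : ∑ _i ∈ s, (#s : ℝ)⁻¹ = 1 := by
    rw [sum_const, nsmul_eq_mul, mul_inv_cancel₀ (by simpa using hs.ne_empty)]
  simpa only [smul_sum, mul_sum, smul_eq_mul] using
    hf.map_sum_le (fun _ _ => by positivity) hw hz

theorem inner_Jmap_self (n : ℕ) (v : EuclideanSpace ℝ (Fin n ⊕ Fin n)) : ⟪v, Jmap n v⟫ = 0 := by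
  simp only [PiLp.inner_apply, RCLike.inner_apply, Fintype.sum_sum_type, Jmap, Sum.elim_inl,
    Sum.elim_inr, conj_trivial, mul_comm, neg_mul, sum_neg_distrib, add_neg_cancel]

theorem norm_Jmap (n : ℕ) (v : EuclideanSpace ℝ (Fin n ⊕ Fin n)) : ‖Jmap n v‖ = ‖v‖ := by
  simp only [EuclideanSpace.norm_eq, Fintype.sum_sum_type, Jmap, Sum.elim_inl,
    Sum.elim_inr, norm_neg, add_comm]

/-- For the explicit discretization `z^{k+1} = z^k + ε(J∇H(z^k) + z⋆ − z^k)`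
with `ε = 1/(L² + 1)`, the averaged iterate `z̄^T = (1/T)∑_{k<T} z^k` satisfies
`H(z̄^T) ≤ (1/(εT))·(H(z^0) + (1/(2L))‖z^0 − z⋆‖²)`, i.e. `H(z̄^T) = O(1/T)`. -/
theorem stmt8 (n : ℕ)
    (H : EuclideanSpace ℝ (Fin n ⊕ Fin n) → ℝ)
    (hconv : ConvexOn ℝ Set.univ H)
    (hH : ∀ w, HasGradientAt H (gradient H w) w)
    (L : ℝ) (hL : 0 < L)
    (hLip : LipschitzWith (Real.toNNReal L) (fun w => gradient H w))
    (zstar : EuclideanSpace ℝ (Fin n ⊕ Fin n))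
    (hmin : H zstar = 0) (hnonneg : ∀ w, 0 ≤ H w)
    (ε : ℝ) (hε : ε = 1 / (L ^ 2 + 1))
    (z : ℕ → EuclideanSpace ℝ (Fin n ⊕ Fin n))
    (hrec : ∀ k, z (k + 1) =
      z k + ε • (Jmap n (gradient H (z k)) + zstar - z k)) :
    ∀ T : ℕ, 0 < T →
      H ((T : ℝ)⁻¹ • ∑ k ∈ range T, z k) ≤
        (1 / (ε * T)) * (H (z 0) + (1 / (2 * L)) * ‖z 0 - zstar‖ ^ 2) := by
  intro T hT
  lift L to ℝ≥0 using hL.le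
  rw [Real.toNNReal_coe] at hLip
  have hdiff : Differentiable ℝ H := fun w => (hH w).differentiableAt
  have hz : gradient H zstar = 0 :=
    IsLocalMin.hasGradientAt_eq_zero (.of_forall fun w => hmin ▸ hnonneg w) (hH zstar)
  have hεpos : 0 < ε := by rw [hε]; positivity
  have hstep (k : ℕ) :
      ε * H (z k) + lyapunov H L zstar (z (k + 1)) ≤ lyapunov H L zstar (z k) := by
    simpa only [hmin, sub_zero, hrec k] using hconv.mul_sub_add_lyapunov_le hdiff
      (by exact_mod_cast hL) hLip hz (inner_Jmap_self n) (norm_Jmap n) hε (z k)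
  have hsum : ε * ∑ k ∈ range T, H (z k) ≤ lyapunov H L zstar (z 0) := by
    have hE_nonneg : 0 ≤ lyapunov H L zstar (z T) := add_nonneg (hnonneg _) (by positivity)
    linarith [mul_sum (range T) (fun k => H (z k)) ε,
      sum_range_le_sub_of_add_le (E := fun k => lyapunov H L zstar (z k)) hstep T]
  calc H ((T : ℝ)⁻¹ • ∑ k ∈ range T, z k) ≤ (T : ℝ)⁻¹ * ∑ k ∈ range T, H (z k) := by
        simpa using hconv.map_inv_card_smul_sum_le (nonempty_range_iff.2 hT.ne')
          (fun k _ => Set.mem_univ (z k))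
    _ ≤ (T : ℝ)⁻¹ * (lyapunov H L zstar (z 0) / ε) := by
        gcongr
        rwa [le_div_iff₀' hεpos]
    _ = _ := by rw [lyapunov]; field_simp
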